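/- Derivative of an edge length with respect to the opposite dihedral angle, spherical case. Let u₁,…,u₄ : J → ℝ⁴ be a C¹ family (J an open interval) of unit vectors which are linearly independent for every t ∈ J, such that the five geodesic distances l_{ab} = arccos⟨u_a,u_b⟩ with (a,b) ≠ (1,4) are constant in t, while l₁₄(t) = arccos⟨u₁(t),u₄(t)⟩ varies. Let θ₂₃(t) be the interior dihedral angle along the edge (2,3) and G(t) the Gram determinant det(cos l_{ab}). Then for all t ∈ J: |θ₂₃′(t)| · √(G(t)) = sin(l₁₄(t)) · sin(l₂₃) · |l₁₄′(t)|. -/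

import Mathlib

/-!
Vertices `u₁, …, u₄` are `u 0, …, u 3`. Let `P` be the orthogonal projection onto
`(span {u₂, u₃})ᗮ`, so that `θ₂₃` is the angle between `P u₁` and `P u₄`. The explicit
formula for the projection onto the span of two unit vectors shows that `‖P u₁‖`, `‖P u₄‖` and
`⟪P u₁, P u₄⟫ - ⟪u₁, u₄⟫` only depend on the five fixed edges, so
`θ₂₃ = arccos ((x + k) / (‖P u₁‖ ‖P u₄‖))` with `x = ⟪u₁, u₄⟫ = cos l₁₄` and `k` constant.
Differentiating this and `l₁₄ = arccos x` gives `|θ₂₃'| ‖P u₁‖ ‖P u₄‖ sin θ₂₃ = |x'| =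
|l₁₄'| sin l₁₄`. Finally the Gram determinant of `u₁, …, u₄` is that of `u₂, u₃` times that of
`P u₁, P u₄`, i.e. `G = (sin l₂₃ · ‖P u₁‖ ‖P u₄‖ sin θ₂₃)²`.
-/

open Real
open scoped RealInnerProductSpace

noncomputable abbrev E4 := EuclideanSpace ℝ (Fin 4)

/-- The component of `x` orthogonal to the subspace `K`. -/
noncomputable def perpComponent (K : Submodule ℝ E4) (x : E4) : E4 :=
  x - (K.orthogonalProjectionOnto x : E4)

/-- The interior dihedral angle of the spherical tetrahedron spanned by the unit
vectors `u 0, …, u 3` along the edge `(a, b)`: the angle between the orthogonal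
projections of `u c` and `u d` onto the orthogonal complement of `span {u a, u b}`. -/
noncomputable def dihedralAngle (u : Fin 4 → E4) (a b c d : Fin 4) : ℝ :=
  InnerProductGeometry.angle
    (perpComponent (Submodule.span ℝ {u a, u b}) (u c))
    (perpComponent (Submodule.span ℝ {u a, u b}) (u d))

open InnerProductGeometry Matrix Submodule Filter Topology

section

variable {E : Type*} [NormedAddCommGroup E] [InnerProductSpace ℝ E]

instance finiteDimensional_span_pair (e₁ e₂ : E) : FiniteDimensional ℝ (span ℝ {e₁, e₂}) :=
  FiniteDimensional.span_of_finite ℝ (Set.toFinite _)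

/-- The value of `⟪x, P y⟫`, for `P` the orthogonal projection onto the span of unit vectors
`e₁, e₂` with `c = ⟪e₁, e₂⟫`, `aᵢ = ⟪x, eᵢ⟫` and `bᵢ = ⟪eᵢ, y⟫`: the bilinear form of the
inverse of the Gram matrix `!![1, c; c, 1]`. -/
noncomputable def spanPairProjInner (c a₁ a₂ b₁ b₂ : ℝ) : ℝ :=
  (a₁ * b₁ + a₂ * b₂ - c * (a₁ * b₂ + a₂ * b₁)) / (1 - c ^ 2)

theorem starProjection_span_pair {e₁ e₂ : E} (h₁ : ‖e₁‖ = 1) (h₂ : ‖e₂‖ = 1)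
    (hc : ⟪e₁, e₂⟫ ^ 2 ≠ 1) (y : E) :
    (span ℝ {e₁, e₂}).starProjection y =
      ((⟪e₁, y⟫ - ⟪e₁, e₂⟫ * ⟪e₂, y⟫) / (1 - ⟪e₁, e₂⟫ ^ 2)) • e₁ +
      ((⟪e₂, y⟫ - ⟪e₁, e₂⟫ * ⟪e₁, y⟫) / (1 - ⟪e₁, e₂⟫ ^ 2)) • e₂ := by
  have hΔ : 1 - ⟪e₁, e₂⟫ ^ 2 ≠ 0 := sub_ne_zero.mpr hc.symm
  refine eq_starProjection_of_mem_of_inner_eq_zero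
    (mem_span_pair.mpr ⟨_, _, rfl⟩) fun w hw => ?_
  obtain ⟨a, b, rfl⟩ := mem_span_pair.mp hw
  simp only [inner_sub_left, inner_add_left, inner_add_right, real_inner_smul_left,
    real_inner_smul_right, real_inner_self_eq_norm_sq, h₁, h₂, real_inner_comm e₁ e₂,
    real_inner_comm _ y]
  field_simp
  ring

theorem inner_starProjection_span_pair {e₁ e₂ : E} (h₁ : ‖e₁‖ = 1) (h₂ : ‖e₂‖ = 1)
    (hc : ⟪e₁, e₂⟫ ^ 2 ≠ 1) (x y : E) :
    ⟪x, (span ℝ {e₁, e₂}).starProjection y⟫ =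
      spanPairProjInner ⟪e₁, e₂⟫ ⟪x, e₁⟫ ⟪x, e₂⟫ ⟪e₁, y⟫ ⟪e₂, y⟫ := by
  rw [starProjection_span_pair h₁ h₂ hc, spanPairProjInner]
  simp only [inner_add_right, real_inner_smul_right]
  ring

theorem inner_orthogonal_starProjection_span_pair {e₁ e₂ : E} (h₁ : ‖e₁‖ = 1)
    (h₂ : ‖e₂‖ = 1) (hc : ⟪e₁, e₂⟫ ^ 2 ≠ 1) (x y : E) :
    ⟪(span ℝ {e₁, e₂})ᗮ.starProjection x, (span ℝ {e₁, e₂})ᗮ.starProjection y⟫ =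
      ⟪x, y⟫ - spanPairProjInner ⟪e₁, e₂⟫ ⟪x, e₁⟫ ⟪x, e₂⟫ ⟪e₁, y⟫ ⟪e₂, y⟫ := by
  set K := span ℝ {e₁, e₂}
  rw [starProjection_orthogonal_val, starProjection_orthogonal_val, inner_sub_left,
    real_inner_comm _ (K.starProjection x),
    starProjection_inner_eq_zero _ _ (K.starProjection_apply_mem x), sub_zero, inner_sub_right,
    inner_starProjection_span_pair h₁ h₂ hc]

theorem det_gram_eq_det_gram_mul_det_gram_orthogonal {e₁ e₂ : E} (h₁ : ‖e₁‖ = 1)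
    (h₂ : ‖e₂‖ = 1) (hc : ⟪e₁, e₂⟫ ^ 2 ≠ 1) (x y : E) :
    (gram ℝ ![x, e₁, e₂, y]).det = (gram ℝ ![e₁, e₂]).det *
      (gram ℝ ![(span ℝ {e₁, e₂})ᗮ.starProjection x,
        (span ℝ {e₁, e₂})ᗮ.starProjection y]).det := by
  have hΔ : 1 - ⟪e₁, e₂⟫ ^ 2 ≠ 0 := sub_ne_zero.mpr hc.symm
  simp only [det_fin_two (gram ℝ _), gram_apply, cons_val_zero, cons_val_one,
    inner_orthogonal_starProjection_span_pair h₁ h₂ hc]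
  simp only [Nat.succ_eq_add_one, Nat.reduceAdd, det_succ_row_zero, Fin.isValue, gram_apply,
    cons_val_zero, submatrix_apply, Fin.succ_zero_eq_one, Fin.succAbove, cons_val_one,
    submatrix_submatrix, Function.comp_apply, Fin.succ_one_eq_two, cons_val, det_unique,
    Fin.default_eq_zero, Fin.reduceSucc, Fin.castSucc_zero, Fin.sum_univ_succ,
    Fin.coe_ofNat_eq_mod, Nat.zero_mod, pow_zero, one_mul, lt_self_iff_false, ↓reduceIte,
    Fin.castSucc_one, Finset.univ_unique, Fin.val_succ, Fin.val_eq_zero, zero_add, pow_one,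
    Fin.castSucc_succ, neg_mul, Fin.succ_pos, Finset.sum_neg_distrib, Finset.sum_singleton,
    not_lt_zero, Fin.reduceCastSucc, even_two, Even.neg_pow, one_pow, Fin.reduceLT,
    inner_self_eq_norm_sq_to_K, ringHom_apply, h₁, h₂, real_inner_comm e₂ y,
    real_inner_comm e₁ e₂, real_inner_comm e₁ y, cons_val_succ, real_inner_comm x e₁,
    real_inner_comm x e₂, real_inner_comm x y, Fin.lt_one_iff, Fin.reduceEq, neg_add_rev, neg_neg,
    cons_val_fin_one, mul_one, spanPairProjInner]
  field_simp
  ring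

theorem sqrt_det_gram_pair (x y : E) :
    √(gram ℝ ![x, y]).det = ‖x‖ * ‖y‖ * sin (angle x y) := by
  rw [mul_comm, sin_angle_mul_norm_mul_norm, det_fin_two]
  simp [gram_apply, real_inner_comm x y]

theorem inner_sq_lt_one_of_linearIndependent {ι : Type*} {v : ι → E}
    (hv : LinearIndependent ℝ v) {i j : ι} (hi : ‖v i‖ = 1) (hj : ‖v j‖ = 1) (hij : i ≠ j) :
    ⟪v i, v j⟫ ^ 2 < 1 := by
  have hinj : Function.Injective ![i, j] := by
    intro a b; fin_cases a <;> fin_cases b <;> simp [hij, hij.symm]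
  have hpos := (posDef_gram_of_linearIndependent (hv.comp _ hinj)).det_pos
  simp only [det_fin_two, gram_apply, Function.comp_apply, cons_val_zero, cons_val_one,
    cons_val_fin_one, real_inner_self_eq_norm_sq, hi, hj, one_pow, mul_one,
    real_inner_comm (v i), sub_pos] at hpos
  nlinarith

theorem arccos_inner_eq_angle {x y : E} (hx : ‖x‖ = 1) (hy : ‖y‖ = 1) :
    arccos ⟪x, y⟫ = angle x y := by
  simp [angle, hx, hy]

theorem inner_eq_cos_of_arccos_eq {x y : E} (hx : ‖x‖ = 1) (hy : ‖y‖ = 1) {l : ℝ}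
    (h : arccos ⟪x, y⟫ = l) : ⟪x, y⟫ = cos l := by
  rw [← h, arccos_inner_eq_angle hx hy, inner_eq_cos_angle_of_norm_eq_one hx hy]

end

theorem abs_deriv_arccos_comp_mul_sin {f : ℝ → ℝ} {t : ℝ} (hf : DifferentiableAt ℝ f t)
    (hsin : sin (arccos (f t)) ≠ 0) :
    |deriv (fun s => arccos (f s)) t| * sin (arccos (f t)) = |deriv f t| := by
  have h₁ : f t ≠ -1 := fun h => hsin (by simp [h])
  have h₂ : f t ≠ 1 := fun h => hsin (by simp [h])
  have hd : HasDerivAt (fun s => arccos (f s)) (-(1 / √(1 - f t ^ 2)) * deriv f t) t :=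
    (hasDerivAt_arccos h₁ h₂).comp t hf.hasDerivAt
  rw [sin_arccos] at *
  rw [hd.deriv, abs_mul, abs_neg, abs_div, abs_one, abs_of_nonneg (sqrt_nonneg _)]
  field_simp

theorem perpComponent_eq_starProjection_orthogonal (K : Submodule ℝ E4) (x : E4) :
    perpComponent K x = Kᗮ.starProjection x :=
  (starProjection_orthogonal_val x).symm

noncomputable def edgePerp (v : Fin 4 → E4) (a b c : Fin 4) : E4 :=
  perpComponent (span ℝ {v a, v b}) (v c)

theorem inner_edgePerp {v : Fin 4 → E4} (h₁ : ‖v 1‖ = 1) (h₂ : ‖v 2‖ = 1)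
    (hc : ⟪v 1, v 2⟫ ^ 2 ≠ 1) (c d : Fin 4) :
    ⟪edgePerp v 1 2 c, edgePerp v 1 2 d⟫ =
      ⟪v c, v d⟫ - spanPairProjInner ⟪v 1, v 2⟫ ⟪v c, v 1⟫ ⟪v c, v 2⟫ ⟪v 1, v d⟫ ⟪v 2, v d⟫ := by
  simp only [edgePerp, perpComponent_eq_starProjection_orthogonal]
  exact inner_orthogonal_starProjection_span_pair h₁ h₂ hc _ _

theorem dihedralAngle_eq_arccos_of_inner_eq {v w : Fin 4 → E4} (hv : ∀ a, ‖v a‖ = 1)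
    (hw : ∀ a, ‖w a‖ = 1) (hc : ⟪v 1, v 2⟫ ^ 2 ≠ 1)
    (h01 : ⟪w 0, w 1⟫ = ⟪v 0, v 1⟫) (h02 : ⟪w 0, w 2⟫ = ⟪v 0, v 2⟫)
    (h12 : ⟪w 1, w 2⟫ = ⟪v 1, v 2⟫) (h13 : ⟪w 1, w 3⟫ = ⟪v 1, v 3⟫)
    (h23 : ⟪w 2, w 3⟫ = ⟪v 2, v 3⟫) :
    dihedralAngle w 1 2 0 3 = arccos ((⟪edgePerp v 1 2 0, edgePerp v 1 2 3⟫ +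
      ⟪w 0, w 3⟫ - ⟪v 0, v 3⟫) / (‖edgePerp v 1 2 0‖ * ‖edgePerp v 1 2 3‖)) := by
  have hw' : ⟪w 1, w 2⟫ ^ 2 ≠ 1 := h12 ▸ hc
  have h03 : ⟪edgePerp w 1 2 0, edgePerp w 1 2 3⟫ =
      ⟪edgePerp v 1 2 0, edgePerp v 1 2 3⟫ + ⟪w 0, w 3⟫ - ⟪v 0, v 3⟫ := by
    rw [inner_edgePerp (hw 1) (hw 2) hw', inner_edgePerp (hv 1) (hv 2) hc,
      h01, h02, h12, h13, h23]
    ring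
  have h00 : ‖edgePerp w 1 2 0‖ = ‖edgePerp v 1 2 0‖ := by
    rw [norm_eq_sqrt_real_inner, norm_eq_sqrt_real_inner, inner_edgePerp (hw 1) (hw 2) hw',
      inner_edgePerp (hv 1) (hv 2) hc, real_inner_comm (w 0) (w 1), real_inner_comm (w 0) (w 2),
      real_inner_comm (v 0) (v 1), real_inner_comm (v 0) (v 2), h01, h02, h12]
    simp [hv, hw]
  have h33 : ‖edgePerp w 1 2 3‖ = ‖edgePerp v 1 2 3‖ := by
    rw [norm_eq_sqrt_real_inner, norm_eq_sqrt_real_inner, inner_edgePerp (hw 1) (hw 2) hw',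
      inner_edgePerp (hv 1) (hv 2) hc, real_inner_comm (w 1) (w 3), real_inner_comm (w 2) (w 3),
      real_inner_comm (v 1) (v 3), real_inner_comm (v 2) (v 3), h13, h23, h12]
    simp [hv, hw]
  rw [← h03, ← h00, ← h33]
  rfl

theorem sqrt_det_gram_eq_sin_angle_mul {v : Fin 4 → E4} (hv : ∀ a, ‖v a‖ = 1)
    (hc : ⟪v 1, v 2⟫ ^ 2 ≠ 1) :
    √(gram ℝ v).det = sin (angle (v 1) (v 2)) *
      (‖edgePerp v 1 2 0‖ * ‖edgePerp v 1 2 3‖ * sin (dihedralAngle v 1 2 0 3)) := by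
  have hv' : v = ![v 0, v 1, v 2, v 3] := by ext a : 1; fin_cases a <;> rfl
  rw [hv', det_gram_eq_det_gram_mul_det_gram_orthogonal (hv 1) (hv 2) hc,
    sqrt_mul (posSemidef_gram _ _).det_nonneg, sqrt_det_gram_pair, sqrt_det_gram_pair, hv 1,
    hv 2, ← perpComponent_eq_starProjection_orthogonal,
    ← perpComponent_eq_starProjection_orthogonal, one_mul, one_mul]
  rfl

theorem abs_deriv_dihedralAngle_mul {v : ℝ → Fin 4 → E4} {t : ℝ}
    (hunit : ∀ᶠ s in 𝓝 t, ∀ a, ‖v s a‖ = 1) (hc : ⟪v t 1, v t 2⟫ ^ 2 ≠ 1)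
    (h01 : ∀ᶠ s in 𝓝 t, ⟪v s 0, v s 1⟫ = ⟪v t 0, v t 1⟫)
    (h02 : ∀ᶠ s in 𝓝 t, ⟪v s 0, v s 2⟫ = ⟪v t 0, v t 2⟫)
    (h12 : ∀ᶠ s in 𝓝 t, ⟪v s 1, v s 2⟫ = ⟪v t 1, v t 2⟫)
    (h13 : ∀ᶠ s in 𝓝 t, ⟪v s 1, v s 3⟫ = ⟪v t 1, v t 3⟫)
    (h23 : ∀ᶠ s in 𝓝 t, ⟪v s 2, v s 3⟫ = ⟪v t 2, v t 3⟫)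
    (hx : DifferentiableAt ℝ (fun s => ⟪v s 0, v s 3⟫) t)
    (hnd : ‖edgePerp (v t) 1 2 0‖ * ‖edgePerp (v t) 1 2 3‖ *
      sin (dihedralAngle (v t) 1 2 0 3) ≠ 0) :
    |deriv (fun s => dihedralAngle (v s) 1 2 0 3) t| * (‖edgePerp (v t) 1 2 0‖ *
      ‖edgePerp (v t) 1 2 3‖ * sin (dihedralAngle (v t) 1 2 0 3)) =
    |deriv (fun s => ⟪v s 0, v s 3⟫) t| := by
  set R := ‖edgePerp (v t) 1 2 0‖ * ‖edgePerp (v t) 1 2 3‖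
  set f := fun s => (⟪edgePerp (v t) 1 2 0, edgePerp (v t) 1 2 3⟫ + ⟪v s 0, v s 3⟫ -
    ⟪v t 0, v t 3⟫) / R
  have hθ : (fun s => dihedralAngle (v s) 1 2 0 3) =ᶠ[𝓝 t] fun s => arccos (f s) := by
    filter_upwards [hunit, h01, h02, h12, h13, h23] with s hs e01 e02 e12 e13 e23
    exact dihedralAngle_eq_arccos_of_inner_eq hunit.self_of_nhds hs hc e01 e02 e12 e13 e23
  have hθt : dihedralAngle (v t) 1 2 0 3 = arccos (f t) := hθ.self_of_nhds
  have hf : HasDerivAt f (deriv (fun s => ⟪v s 0, v s 3⟫) t / R) t :=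
    ((hx.hasDerivAt.const_add _).sub_const _).div_const R
  have hR : 0 < R := (left_ne_zero_of_mul hnd).symm.lt_of_le (by positivity)
  rw [hθt] at hnd ⊢
  rw [hθ.deriv_eq]
  calc |deriv (fun s => arccos (f s)) t| * (R * sin (arccos (f t)))
      = R * (|deriv (fun s => arccos (f s)) t| * sin (arccos (f t))) := by ring
    _ = R * |deriv f t| := by
      rw [abs_deriv_arccos_comp_mul_sin hf.differentiableAt (right_ne_zero_of_mul hnd)]
    _ = |deriv (fun s => ⟪v s 0, v s 3⟫) t| := by
      rw [hf.deriv, abs_div, abs_of_pos hR]; field_simp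

theorem spherical_opposite_edge_angle_derivative (α β : ℝ) (u : Fin 4 → ℝ → E4)
    (hC1 : ∀ a, ContDiffOn ℝ 1 (u a) (Set.Ioo α β))
    (hunit : ∀ t ∈ Set.Ioo α β, ∀ a, ‖u a t‖ = 1)
    (hli : ∀ t ∈ Set.Ioo α β, LinearIndependent ℝ fun a => u a t)
    (l12 l13 l23 l24 l34 : ℝ)
    (h12 : ∀ t ∈ Set.Ioo α β, Real.arccos ⟪u 0 t, u 1 t⟫ = l12)
    (h13 : ∀ t ∈ Set.Ioo α β, Real.arccos ⟪u 0 t, u 2 t⟫ = l13)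
    (h23 : ∀ t ∈ Set.Ioo α β, Real.arccos ⟪u 1 t, u 2 t⟫ = l23)
    (h24 : ∀ t ∈ Set.Ioo α β, Real.arccos ⟪u 1 t, u 3 t⟫ = l24)
    (h34 : ∀ t ∈ Set.Ioo α β, Real.arccos ⟪u 2 t, u 3 t⟫ = l34) :
    ∀ t ∈ Set.Ioo α β,
      |deriv (fun s => dihedralAngle (fun a => u a s) 1 2 0 3) t| *
        Real.sqrt (Matrix.det (Matrix.of fun a b : Fin 4 =>
          Real.cos (Real.arccos ⟪u a t, u b t⟫))) =
      Real.sin (Real.arccos ⟪u 0 t, u 3 t⟫) * Real.sin l23 *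
        |deriv (fun s => Real.arccos ⟪u 0 s, u 3 s⟫) t| := by
  intro t ht
  have hI : ∀ᶠ s in 𝓝 t, s ∈ Set.Ioo α β := Ioo_mem_nhds ht.1 ht.2
  have hfix : ∀ a b l, (∀ s ∈ Set.Ioo α β, arccos ⟪u a s, u b s⟫ = l) →
      ∀ᶠ s in 𝓝 t, ⟪u a s, u b s⟫ = ⟪u a t, u b t⟫ := fun a b l hl => by
    filter_upwards [hI] with s hs
    rw [inner_eq_cos_of_arccos_eq (hunit s hs a) (hunit s hs b) (hl s hs),
      inner_eq_cos_of_arccos_eq (hunit t ht a) (hunit t ht b) (hl t ht)]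
  have hc := (inner_sq_lt_one_of_linearIndependent (hli t ht) (hunit t ht 1) (hunit t ht 2)
    (by decide)).ne
  have hgram : (Matrix.of fun a b : Fin 4 => cos (arccos ⟪u a t, u b t⟫)) =
      gram ℝ fun a => u a t := by
    ext a b
    exact (inner_eq_cos_of_arccos_eq (hunit t ht a) (hunit t ht b) rfl).symm
  have hG := sqrt_det_gram_eq_sin_angle_mul (hunit t ht) hc
  rw [← arccos_inner_eq_angle (hunit t ht 1) (hunit t ht 2), h23 t ht] at hG
  have hnd := right_ne_zero_of_mul
    (hG ▸ sqrt_pos.mpr (posDef_gram_of_linearIndependent (hli t ht)).det_pos).ne'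
  have h14 : sin (arccos ⟪u 0 t, u 3 t⟫) ≠ 0 := by
    rw [sin_arccos, sqrt_ne_zero', sub_pos]
    exact inner_sq_lt_one_of_linearIndependent (hli t ht) (hunit t ht 0) (hunit t ht 3)
      (by decide)
  have hdiff : ∀ a, DifferentiableAt ℝ (u a) t := fun a =>
    ((hC1 a).contDiffAt hI).differentiableAt one_ne_zero
  have hx : DifferentiableAt ℝ (fun s => ⟪u 0 s, u 3 s⟫) t := (hdiff 0).inner ℝ (hdiff 3)
  have hθ := abs_deriv_dihedralAngle_mul (v := fun s a => u a s)
    (hI.mono fun s hs => hunit s hs) hc (hfix 0 1 l12 h12) (hfix 0 2 l13 h13)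
    (hfix 1 2 l23 h23) (hfix 1 3 l24 h24) (hfix 2 3 l34 h34) hx hnd
  have hl := abs_deriv_arccos_comp_mul_sin hx h14
  rw [hgram, hG]
  linear_combination sin l23 * hθ - sin l23 * hl
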